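/- arXiv:1206.3669 — 2 statements merged into one kernel-verified Lean document; each statement's English description precedes it below -/
import Mathlib

section
/- Let L be a finite-dimensional Lie algebra such that every proper quotient of L by a nonzero ideal is solvable, and suppose L is not solvable. Then L has a unique minimal ideal. -/
/-!
If two nonzero ideals `I`, `J` met in `⊥`, the derived series of `L` would eventually lie in
both (because `L ⧸ I` and `L ⧸ J` are solvable), hence vanish, making `L` solvable. So in the
lattice of ideals any two nonzero elements meet nontrivially; since this lattice is atomic
(finite dimension) and nontrivial (`L ≠ 0`, being non-solvable), it has exactly one atom.
-/

section Order

variable {α : Type*}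

theorem isAtom_iff_ne_bot_and_forall_le [PartialOrder α] [OrderBot α] {a : α} :
    IsAtom a ↔ a ≠ ⊥ ∧ ∀ b ≤ a, b = ⊥ ∨ b = a :=
  ⟨fun ha => ⟨ha.ne_bot, fun _ => ha.le_iff.mp⟩,
    fun ⟨ha, hle⟩ => ⟨ha, fun b hb => (hle b hb.le).resolve_right hb.ne⟩⟩

theorem existsUnique_isAtom_of_inf_ne_bot [Lattice α] [OrderBot α] [IsAtomic α] [Nontrivial α]
    (hinf : ∀ a b : α, a ≠ ⊥ → b ≠ ⊥ → a ⊓ b ≠ ⊥) : ∃! a : α, IsAtom a := by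
  obtain ⟨x, hx⟩ := exists_ne (⊥ : α)
  obtain ⟨a, ha, -⟩ := (eq_bot_or_exists_atom_le x).resolve_left hx
  refine ⟨a, ha, fun b hb => ?_⟩
  by_contra hba
  exact hinf b a hb.ne_bot ha.ne_bot (hb.disjoint_of_ne ha hba).eq_bot

end Order

namespace LieIdeal

variable {R L : Type*} [CommRing R] [LieRing L] [LieAlgebra R L]

def mkQ (I : LieIdeal R L) : L →ₗ⁅R⁆ L ⧸ I :=
  { LieSubmodule.Quotient.mk' I with map_lie' := rfl }

theorem mkQ_surjective (I : LieIdeal R L) : Function.Surjective I.mkQ :=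
  LieSubmodule.Quotient.surjective_mk' I

theorem ker_mkQ (I : LieIdeal R L) : I.mkQ.ker = I := by
  ext x
  exact LieSubmodule.Quotient.mk_eq_zero I

theorem exists_derivedSeries_le_of_isSolvable_quotient (I : LieIdeal R L)
    [LieAlgebra.IsSolvable (L ⧸ I)] : ∃ n, LieAlgebra.derivedSeries R L n ≤ I := by
  obtain ⟨n, hn⟩ := LieAlgebra.IsSolvable.solvable (R := R) (L := L ⧸ I)
  refine ⟨n, ?_⟩
  have hmap := derivedSeries_map_eq n I.mkQ_surjective
  rw [hn, map_eq_bot_iff, ker_mkQ] at hmap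
  exact hmap

theorem isSolvable_of_inf_eq_bot {I J : LieIdeal R L} [LieAlgebra.IsSolvable (L ⧸ I)]
    [LieAlgebra.IsSolvable (L ⧸ J)] (hIJ : I ⊓ J = ⊥) : LieAlgebra.IsSolvable L := by
  obtain ⟨n, hn⟩ := I.exists_derivedSeries_le_of_isSolvable_quotient
  obtain ⟨m, hm⟩ := J.exists_derivedSeries_le_of_isSolvable_quotient
  refine LieAlgebra.IsSolvable.mk (k := n + m) (eq_bot_iff.mpr (hIJ ▸ le_inf ?_ ?_))
  · exact (LieAlgebra.derivedSeriesOfIdeal_antitone ⊤ (Nat.le_add_right n m)).trans hn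
  · exact (LieAlgebra.derivedSeriesOfIdeal_antitone ⊤ (Nat.le_add_left m n)).trans hm

end LieIdeal

/-- If every proper quotient of a finite-dimensional Lie algebra `L` by a
nonzero ideal is solvable and `L` is not solvable, then `L` has a unique minimal ideal. -/
theorem unique_minimal_ideal_of_proper_quotients_solvable
    (F : Type*) (L : Type*) [Field F] [LieRing L] [LieAlgebra F L]
    [FiniteDimensional F L]
    (hquot : ∀ K : LieIdeal F L, K ≠ ⊥ → LieAlgebra.IsSolvable (L ⧸ K))
    (hns : ¬ LieAlgebra.IsSolvable L) :
    ∃! I : LieIdeal F L, I ≠ ⊥ ∧ ∀ J : LieIdeal F L, J ≤ I → J = ⊥ ∨ J = I := by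
  have : Nontrivial L := by
    by_contra h
    have := not_nontrivial_iff_subsingleton.mp h
    exact hns inferInstance
  have hinf (I J : LieIdeal F L) (hI : I ≠ ⊥) (hJ : J ≠ ⊥) : I ⊓ J ≠ ⊥ := by
    have := hquot I hI
    have := hquot J hJ
    exact fun hIJ => hns (LieIdeal.isSolvable_of_inf_eq_bot hIJ)
  simpa only [isAtom_iff_ne_bot_and_forall_le] using existsUnique_isAtom_of_inf_ne_bot hinf
end

section
/- Let L be a finite-dimensional Lie algebra over a field of prime characteristic p, let I be an ideal of codimension one in L, and let S be a finite-dimensional irreducible I-module. Then every composition factor of the restriction to I of the truncated coinduced L-module Hom_{O(L,I)}(U(L), S) is isomorphic to S. -/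
/-!
Write `τ = ι t` and `N = p ^ m`. Since `L = F t ⊕ I` and `τ ^ N = z - v` with `z ∈ O(L,I)` and
`v` of degree `< N`, the algebra `U(L)` is spanned by the products `o * τ ^ i` with
`o ∈ O(L,I)` and `i < N`. Hence an `O(L,I)`-equivariant `f` vanishes once `f (τ ^ i) = 0` for all
`i < N`, and the `M k = {f | f (τ ^ i) = 0 for i < k}` form a filtration of the coinduced module
by `I`-submodules from `M 0 = ⊤` down to `M N = ⊥`. Commuting `ι x` (`x ∈ I`) past `τ ^ k` only
produces terms `ι y * τ ^ j` with `y ∈ I` and `j < k`, so `f ↦ f (τ ^ k)` is an `I`-module map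
`M k → S` with kernel `M (k + 1)`.

For an irreducible subquotient `Q / P`, let `k` be least with `Q ⊓ M (k + 1) ≤ P`. Evaluation at
`τ ^ k` maps `Q ⊓ M k` onto the irreducible `S` with kernel inside `P`, so the projection to
`Q / P` factors through a nonzero map `S → Q / P`, an isomorphism by Schur's lemma.
-/

section TruncatedCoinduced

variable (F : Type*) (L : Type*) [Field F] [LieRing L] [LieAlgebra F L]

attribute [local instance 100] LieRing.ofAssociativeRing

/-- The canonical (degree) filtration of the universal enveloping algebra: the `k`-th
piece is spanned by products of at most `k` elements of (the image of) `L`. -/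
def ueaFiltration (k : ℕ) : Submodule F (UniversalEnvelopingAlgebra F L) :=
  (Submodule.span F
    ({1} ∪ Set.range ⇑(UniversalEnvelopingAlgebra.ι F : L →ₗ⁅F⁆ _))) ^ k

variable (I : LieIdeal F L) (z : UniversalEnvelopingAlgebra F L)

/-- The subalgebra `O(L,I)` of `U(L)` generated by `I` together with the central
element `z`. -/
def truncO : Subalgebra F (UniversalEnvelopingAlgebra F L) :=
  Algebra.adjoin F
    ((⇑(UniversalEnvelopingAlgebra.ι F : L →ₗ⁅F⁆ _) '' (I : Set L)) ∪ {z})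

variable (S : Type*) [AddCommGroup S] [Module F S]
variable (ρ : ↥(truncO F L I z) →ₐ[F] Module.End F S)

/-- The truncated coinduced module `Hom_{O(L,I)}(U(L), S)`: the `O(L,I)`-equivariant
linear maps `U(L) → S`, where `O(L,I)` acts on `S` via `ρ`. -/
def coindHom : Submodule F (UniversalEnvelopingAlgebra F L →ₗ[F] S) where
  carrier := {f | ∀ (o : ↥(truncO F L I z)) (a : UniversalEnvelopingAlgebra F L),
    f (↑o * a) = ρ o (f a)}
  add_mem' := fun {f g} hf hg o a => by
    simp [LinearMap.add_apply, hf o a, hg o a]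
  zero_mem' := fun o a => by simp
  smul_mem' := fun c f hf o a => by
    simp [LinearMap.smul_apply, hf o a]

/-- The action of `x ∈ I ⊆ L` on `Hom_{O(L,I)}(U(L), S)` (the restriction to `I` of the
natural `L`-module structure on the coinduced module): `(x • f)(a) = f (a * ι x)`. -/
instance coindHomLieRingModule :
    LieRingModule ↥I ↥(coindHom F L I z S ρ) where
  bracket x f :=
    ⟨(f : UniversalEnvelopingAlgebra F L →ₗ[F] S).comp
        (LinearMap.mulRight F (UniversalEnvelopingAlgebra.ι F (x : L))),
     fun o a => by
       simpa [LinearMap.comp_apply, LinearMap.mulRight_apply, mul_assoc]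
         using f.2 o (a * UniversalEnvelopingAlgebra.ι F (x : L))⟩
  add_lie x y f := by
    ext a
    show (f : _ →ₗ[F] S) (a * UniversalEnvelopingAlgebra.ι F ((x : L) + (y : L))) = _
    simp [mul_add]
  lie_add x f g := by
    ext a
    rfl
  leibniz_lie x y f := by
    ext a
    show (f : _ →ₗ[F] S)
        (a * UniversalEnvelopingAlgebra.ι F (x : L) *
          UniversalEnvelopingAlgebra.ι F (y : L)) =
      (f : _ →ₗ[F] S) (a * UniversalEnvelopingAlgebra.ι F ⁅(x : L), (y : L)⁆) +
        (f : _ →ₗ[F] S)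
          (a * UniversalEnvelopingAlgebra.ι F (y : L) *
            UniversalEnvelopingAlgebra.ι F (x : L))
    rw [LieHom.map_lie, LieRing.of_associative_ring_bracket, ← map_add]
    congr 1
    noncomm_ring

instance coindHomLieModule [LieRingModule ↥I S] :
    LieModule F ↥I ↥(coindHom F L I z S ρ) where
  smul_lie c x f := by
    ext a
    show (f : _ →ₗ[F] S)
        (a * UniversalEnvelopingAlgebra.ι F ((c • x : ↥I) : L)) =
      c • (f : _ →ₗ[F] S) (a * UniversalEnvelopingAlgebra.ι F (x : L))
    rw [show ((c • x : ↥I) : L) = c • (x : L) from rfl, map_smul,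
      mul_smul_comm, LinearMap.map_smul]
  lie_smul c x f := by
    ext a
    rfl

end TruncatedCoinduced

section SpanMul

variable {R A : Type*} [CommSemiring R] [Semiring A] [Algebra R A]

theorem Submodule.mul_mem_right_of_mem_span {s : Set A} {W : Submodule R A} {a u : A}
    (h : ∀ w ∈ s, w * a ∈ W) (hu : u ∈ Submodule.span R s) : u * a ∈ W :=
  (Submodule.span_le (p := W.comap (LinearMap.mulRight R a))).mpr h hu

theorem Submodule.mul_mem_left_of_mem_span {s : Set A} {W : Submodule R A} {a u : A}
    (h : ∀ w ∈ s, a * w ∈ W) (hu : u ∈ Submodule.span R s) : a * u ∈ W :=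
  (Submodule.span_le (p := W.comap (LinearMap.mulLeft R a))).mpr h hu

theorem Submodule.eq_top_of_one_mem_of_mul_mem {s : Set A} (hs : Algebra.adjoin R s = ⊤)
    {V : Submodule R A} (h1 : 1 ∈ V) (hV : ∀ u ∈ V, ∀ a ∈ s, u * a ∈ V) : V = ⊤ := by
  rw [eq_top_iff]
  rintro a -
  have ha : a ∈ Algebra.adjoin R s := hs ▸ trivial
  suffices ∀ u ∈ V, u * a ∈ V by simpa using this 1 h1
  induction ha using Algebra.adjoin_induction with
  | mem a ha => exact fun u hu => hV u hu a ha
  | algebraMap r =>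
    intro u hu
    rw [← Algebra.commutes, ← Algebra.smul_def]
    exact V.smul_mem r hu
  | add a b _ _ ha hb =>
    intro u hu
    rw [mul_add]
    exact add_mem (ha u hu) (hb u hu)
  | mul a b _ _ ha hb =>
    intro u hu
    rw [← mul_assoc]
    exact hb _ (ha u hu)

end SpanMul

theorem Submodule.exists_sub_smul_mem_of_finrank_quotient_eq_one {K V : Type*} [Field K]
    [AddCommGroup V] [Module K V] {p : Submodule K V} (hp : Module.finrank K (V ⧸ p) = 1)
    {t : V} (ht : t ∉ p) (y : V) : ∃ c : K, y - c • t ∈ p := by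
  have ht' : p.mkQ t ≠ 0 := by simpa using ht
  have hy : p.mkQ y ∈ Submodule.span K {p.mkQ t} := by
    rw [(finrank_eq_one_iff_of_nonzero _ ht').mp hp]; trivial
  obtain ⟨c, hc⟩ := Submodule.mem_span_singleton.mp hy
  exact ⟨c, (Submodule.Quotient.eq p).mp (by simpa using hc.symm)⟩

namespace UniversalEnvelopingAlgebra

variable {F L : Type*} [Field F] [LieRing L] [LieAlgebra F L]

attribute [local instance 100] LieRing.ofAssociativeRing

theorem adjoin_range_ι : Algebra.adjoin F (Set.range (ι F : L →ₗ⁅F⁆ _)) = ⊤ := by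
  have hmk : Function.Surjective (mkAlgHom F L) := RingCon.mkₐ_surjective _
  rw [← (AlgHom.range_eq_top _).mpr hmk, ← Algebra.map_top,
    ← TensorAlgebra.adjoin_range_ι, AlgHom.map_adjoin, ← Set.range_comp]
  rfl

theorem ι_mul_ι (a b : L) : ι F a * ι F b = ι F b * ι F a + ι F ⁅a, b⁆ := by
  rw [LieHom.map_lie, LieRing.of_associative_ring_bracket]; abel

end UniversalEnvelopingAlgebra

section LieModule

open LieModule

variable {R Lg M N N' : Type*} [CommRing R] [LieRing Lg]
  [AddCommGroup M] [Module R M] [LieRingModule Lg M]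
  [AddCommGroup N] [Module R N] [LieRingModule Lg N]
  [AddCommGroup N'] [Module R N'] [LieRingModule Lg N']

noncomputable def LieModuleEquiv.ofBijective (f : M →ₗ⁅R,Lg⁆ N) (hf : Function.Bijective f) :
    M ≃ₗ⁅R,Lg⁆ N :=
  { f, Equiv.ofBijective f hf with }

theorem LieModuleHom.surjective_of_isIrreducible [IsIrreducible R Lg N]
    {f : M →ₗ⁅R,Lg⁆ N} (hf : f ≠ 0) : Function.Surjective f := by
  refine (LieModuleHom.range_eq_top f).mp ((eq_bot_or_eq_top f.range).resolve_left ?_)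
  exact fun h => hf (LieModuleHom.ext fun m => by
    simpa using (h ▸ f.mem_range_self m : f m ∈ (⊥ : LieSubmodule R Lg N)))

theorem LieModuleHom.bijective_of_isIrreducible [IsIrreducible R Lg M] [IsIrreducible R Lg N]
    {f : M →ₗ⁅R,Lg⁆ N} (hf : f ≠ 0) : Function.Bijective f := by
  refine ⟨(LieModuleHom.ker_eq_bot f).mp ((eq_bot_or_eq_top f.ker).resolve_right ?_),
    f.surjective_of_isIrreducible hf⟩
  exact fun h => hf (LieModuleHom.ext fun m => LieModuleHom.mem_ker.mp (h ▸ trivial))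

theorem LieModuleHom.exists_comp_eq_of_ker_le (g : M →ₗ⁅R,Lg⁆ N) (hg : Function.Surjective g)
    (f : M →ₗ⁅R,Lg⁆ N') (h : g.ker ≤ f.ker) : ∃ φ : N →ₗ⁅R,Lg⁆ N', ∀ m, φ (g m) = f m := by
  let φ : N →ₗ[R] N' := (LinearMap.ker (g : M →ₗ[R] N)).liftQ f h ∘ₗ
    ((g : M →ₗ[R] N).quotKerEquivOfSurjective hg).symm.toLinearMap
  have hφ : ∀ m, φ (g m) = f m := fun m => by
    simp only [φ, LinearMap.comp_apply, LinearEquiv.coe_coe]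
    rw [show g m = (g : M →ₗ[R] N) m from rfl, LinearMap.quotKerEquivOfSurjective_symm_apply]
    rfl
  refine ⟨{ φ with map_lie' := ?_ }, hφ⟩
  intro x n
  obtain ⟨m, rfl⟩ := hg n
  simp only [AddHom.toFun_eq_coe, LinearMap.coe_toAddHom]
  rw [← LieModuleHom.map_lie, hφ, hφ, LieModuleHom.map_lie]

variable [LieAlgebra R Lg] [LieModule R Lg M] [IsIrreducible R Lg N]

theorem LieSubmodule.nonempty_map_mk'_equiv_of_inf_le {P Q A B : LieSubmodule R Lg M}
    [IsIrreducible R Lg (Q.map (LieSubmodule.Quotient.mk' P))]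
    (β : A →ₗ⁅R,Lg⁆ N) (hβ : ∀ a, β a = 0 → (a : M) ∈ B) (hB : Q ⊓ B ≤ P) (hA : ¬ Q ⊓ A ≤ P) :
    Nonempty (Q.map (LieSubmodule.Quotient.mk' P) ≃ₗ⁅R,Lg⁆ N) := by
  obtain ⟨f₀, hf₀, hf₀P⟩ := SetLike.not_le_iff_exists.mp hA
  let β' : ↥(Q ⊓ A) →ₗ⁅R,Lg⁆ N := β.comp (LieSubmodule.inclusion inf_le_right)
  let α : ↥(Q ⊓ A) →ₗ⁅R,Lg⁆ Q.map (LieSubmodule.Quotient.mk' P) :=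
    ((LieSubmodule.Quotient.mk' P).comp (Q ⊓ A).incl).codRestrict _
      fun r => LieSubmodule.mem_map_of_mem r.2.1
  have hα : ∀ r, α r = 0 ↔ (r : M) ∈ P := fun r => by
    rw [← LieSubmodule.Quotient.mk_eq_zero, ← Subtype.coe_inj]; rfl
  have hβ' : ∀ r, β' r = 0 → α r = 0 := fun r hr => (hα r).mpr (hB ⟨r.2.1, hβ _ hr⟩)
  have hβ'0 : β' ≠ 0 := fun h => hf₀P (hB ⟨hf₀.1, hβ _ (LieModuleHom.congr_fun h ⟨f₀, hf₀⟩)⟩)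
  obtain ⟨ψ, hψ⟩ := β'.exists_comp_eq_of_ker_le (β'.surjective_of_isIrreducible hβ'0) α
    fun r hr => LieModuleHom.mem_ker.mpr (hβ' r (LieModuleHom.mem_ker.mp hr))
  have hψ0 : ψ ≠ 0 := fun h => hf₀P ((hα ⟨f₀, hf₀⟩).mp (by
    rw [← hψ, h, LieModuleHom.zero_apply]))
  exact ⟨(LieModuleEquiv.ofBijective ψ (ψ.bijective_of_isIrreducible hψ0)).symm⟩

theorem LieSubmodule.nonempty_map_mk'_equiv_of_filtration (M' : ℕ → LieSubmodule R Lg M)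
    (h0 : M' 0 = ⊤) {n : ℕ} (hn : M' n = ⊥) (β : ∀ k, M' k →ₗ⁅R,Lg⁆ N)
    (hβ : ∀ k a, β k a = 0 → (a : M) ∈ M' (k + 1)) (P Q : LieSubmodule R Lg M)
    [IsIrreducible R Lg (Q.map (LieSubmodule.Quotient.mk' P))] :
    Nonempty (Q.map (LieSubmodule.Quotient.mk' P) ≃ₗ⁅R,Lg⁆ N) := by
  classical
  have hex : ∃ n, Q ⊓ M' n ≤ P := ⟨n, by simp [hn]⟩
  have hQP : ¬ Q ≤ P := fun h => by
    have := LieModule.nontrivial_of_isIrreducible R Lg (Q.map (LieSubmodule.Quotient.mk' P))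
    exact (LieSubmodule.nontrivial_iff_ne_bot R Lg _).mp this
      ((LieSubmodule.Quotient.map_mk'_eq_bot_le _ _).mpr h)
  have hspec := Nat.find_spec hex
  obtain ⟨k, hk⟩ : ∃ k, Nat.find hex = k + 1 := Nat.exists_eq_succ_of_ne_zero fun h => by
    rw [h, h0, inf_top_eq] at hspec
    exact hQP hspec
  rw [hk] at hspec
  exact LieSubmodule.nonempty_map_mk'_equiv_of_inf_le (β k) (hβ k) hspec
    (Nat.find_min hex (by omega))

end LieModule

section TruncSpan

open UniversalEnvelopingAlgebra

variable {F L : Type*} [Field F] [LieRing L] [LieAlgebra F L]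

attribute [local instance 100] LieRing.ofAssociativeRing

variable (I : LieIdeal F L) (t : L)

def lowerTerms (i : ℕ) : Submodule F (UniversalEnvelopingAlgebra F L) :=
  Submodule.span F {u | ∃ y ∈ I, ∃ j < i, u = ι F y * ι F t ^ j}

theorem ι_mul_mem_lowerTerms_succ {i : ℕ} {u : UniversalEnvelopingAlgebra F L}
    (hu : u ∈ lowerTerms I t i) : ι F t * u ∈ lowerTerms I t (i + 1) := by
  refine Submodule.mul_mem_left_of_mem_span ?_ hu
  rintro _ ⟨y, hy, j, hj, rfl⟩
  rw [← mul_assoc, ι_mul_ι, add_mul, mul_assoc, ← pow_succ']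
  exact add_mem (Submodule.subset_span ⟨y, hy, j + 1, by omega, rfl⟩)
    (Submodule.subset_span ⟨⁅t, y⁆, I.lie_mem hy, j, by omega, rfl⟩)

theorem pow_mul_ι_sub_mem_lowerTerms (i : ℕ) {x : L} (hx : x ∈ I) :
    ι F t ^ i * ι F x - ι F x * ι F t ^ i ∈ lowerTerms I t i := by
  induction i with
  | zero => simp
  | succ i ih =>
    have key : ι F t ^ (i + 1) * ι F x - ι F x * ι F t ^ (i + 1) =
        ι F t * (ι F t ^ i * ι F x - ι F x * ι F t ^ i) + ι F ⁅t, x⁆ * ι F t ^ i := by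
      rw [pow_succ', mul_sub, ← mul_assoc (ι F t) (ι F x), ι_mul_ι t x]
      noncomm_ring
    rw [key]
    exact add_mem (ι_mul_mem_lowerTerms_succ I t ih)
      (Submodule.subset_span ⟨⁅t, x⁆, I.lie_mem hx, i, by omega, rfl⟩)

variable (z : UniversalEnvelopingAlgebra F L)

def truncSpan (j : ℕ) : Submodule F (UniversalEnvelopingAlgebra F L) :=
  Submodule.span F {u | ∃ o ∈ truncO F L I z, ∃ i ≤ j, u = o * ι F t ^ i}

theorem mul_pow_mem_truncSpan {o : UniversalEnvelopingAlgebra F L} (ho : o ∈ truncO F L I z)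
    {i j : ℕ} (hij : i ≤ j) : o * ι F t ^ i ∈ truncSpan I t z j :=
  Submodule.subset_span ⟨o, ho, i, hij, rfl⟩

theorem truncSpan_mono {j j' : ℕ} (h : j ≤ j') : truncSpan I t z j ≤ truncSpan I t z j' :=
  Submodule.span_mono fun _ ⟨o, ho, i, hi, hu⟩ => ⟨o, ho, i, hi.trans h, hu⟩

theorem ι_mem_truncO {y : L} (hy : y ∈ I) : ι F y ∈ truncO F L I z :=
  Algebra.subset_adjoin (Set.mem_union_left _ (Set.mem_image_of_mem _ hy))

theorem mem_truncO_self : z ∈ truncO F L I z :=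
  Algebra.subset_adjoin (Set.mem_union_right _ rfl)

theorem mul_mem_truncSpan {o u : UniversalEnvelopingAlgebra F L} (ho : o ∈ truncO F L I z)
    {j : ℕ} (hu : u ∈ truncSpan I t z j) : o * u ∈ truncSpan I t z j := by
  refine Submodule.mul_mem_left_of_mem_span ?_ hu
  rintro _ ⟨o', ho', i, hi, rfl⟩
  rw [← mul_assoc]
  exact mul_pow_mem_truncSpan I t z (mul_mem ho ho') hi

theorem lowerTerms_le_truncSpan {i j : ℕ} (h : i ≤ j + 1) :
    lowerTerms I t i ≤ truncSpan I t z j := by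
  rw [lowerTerms, Submodule.span_le]
  rintro _ ⟨y, hy, j', hj', rfl⟩
  exact mul_pow_mem_truncSpan I t z (ι_mem_truncO I z hy) (by omega)

theorem truncSpan_mul_ι_mem {x : L} (hx : x ∈ I) {j : ℕ} {u : UniversalEnvelopingAlgebra F L}
    (hu : u ∈ truncSpan I t z j) : u * ι F x ∈ truncSpan I t z j := by
  refine Submodule.mul_mem_right_of_mem_span ?_ hu
  rintro _ ⟨o, ho, i, hi, rfl⟩
  rw [show o * ι F t ^ i * ι F x =
      o * ι F x * ι F t ^ i + o * (ι F t ^ i * ι F x - ι F x * ι F t ^ i) by noncomm_ring]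
  exact add_mem (mul_pow_mem_truncSpan I t z (mul_mem ho (ι_mem_truncO I z hx)) hi)
    (mul_mem_truncSpan I t z ho
      (lowerTerms_le_truncSpan I t z (by omega) (pow_mul_ι_sub_mem_lowerTerms I t i hx)))

theorem truncSpan_mul_ι_self_mem {j : ℕ} {u : UniversalEnvelopingAlgebra F L}
    (hu : u ∈ truncSpan I t z j) : u * ι F t ∈ truncSpan I t z (j + 1) := by
  refine Submodule.mul_mem_right_of_mem_span ?_ hu
  rintro _ ⟨o, ho, i, hi, rfl⟩
  rw [mul_assoc, ← pow_succ]
  exact mul_pow_mem_truncSpan I t z ho (by omega)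

theorem mem_truncSpan_of_mem_truncO {o : UniversalEnvelopingAlgebra F L}
    (ho : o ∈ truncO F L I z) (j : ℕ) : o ∈ truncSpan I t z j := by
  simpa using mul_pow_mem_truncSpan I t z ho (Nat.zero_le j)

variable {I t} in
theorem mul_ι_mem_of_forall_mul_ι_mem (hdec : ∀ y : L, ∃ c : F, y - c • t ∈ I)
    {W : Submodule F (UniversalEnvelopingAlgebra F L)} {u : UniversalEnvelopingAlgebra F L}
    (hI : ∀ x ∈ I, u * ι F x ∈ W) (ht : u * ι F t ∈ W) (y : L) : u * ι F y ∈ W := by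
  obtain ⟨c, hc⟩ := hdec y
  rw [show y = c • t + (y - c • t) by abel, map_add, map_smul, mul_add, mul_smul_comm]
  exact add_mem (W.smul_mem c ht) (hI _ hc)

theorem ueaFiltration_le_truncSpan (hdec : ∀ y : L, ∃ c : F, y - c • t ∈ I) :
    ∀ k, ueaFiltration F L k ≤ truncSpan I t z k
  | 0 => by
    rw [ueaFiltration, pow_zero, Submodule.one_eq_span, Submodule.span_le,
      Set.singleton_subset_iff]
    exact mem_truncSpan_of_mem_truncO I t z (one_mem _) 0
  | k + 1 => by
    rw [ueaFiltration, pow_succ, Submodule.mul_le]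
    intro u hu g hg
    have hu' := ueaFiltration_le_truncSpan hdec k hu
    refine Submodule.mul_mem_left_of_mem_span ?_ hg
    rintro _ (rfl | ⟨y, rfl⟩)
    · rw [mul_one]
      exact truncSpan_mono I t z k.le_succ hu'
    · exact mul_ι_mem_of_forall_mul_ι_mem hdec
        (fun x hx => truncSpan_mono I t z k.le_succ (truncSpan_mul_ι_mem I t z hx hu'))
        (truncSpan_mul_ι_self_mem I t z hu') y

theorem truncSpan_eq_top (hdec : ∀ y : L, ∃ c : F, y - c • t ∈ I) {N : ℕ} (hN : 0 < N)
    {v : UniversalEnvelopingAlgebra F L} (hz : z = ι F t ^ N + v)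
    (hv : v ∈ ueaFiltration F L (N - 1)) : truncSpan I t z (N - 1) = ⊤ := by
  have hv' := ueaFiltration_le_truncSpan I t z hdec (N - 1) hv
  have hmul_self : ∀ u ∈ truncSpan I t z (N - 1), u * ι F t ∈ truncSpan I t z (N - 1) := by
    intro u hu
    refine Submodule.mul_mem_right_of_mem_span ?_ hu
    rintro _ ⟨o, ho, i, hi, rfl⟩
    rw [mul_assoc, ← pow_succ]
    rcases Nat.lt_or_ge (i + 1) N with hiN | hiN
    · exact mul_pow_mem_truncSpan I t z ho (by omega)
    · rw [show i + 1 = N by omega, show ι F t ^ N = z - v by rw [hz]; abel, mul_sub]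
      exact sub_mem (mem_truncSpan_of_mem_truncO I t z (mul_mem ho (mem_truncO_self I z)) _)
        (mul_mem_truncSpan I t z ho hv')
  refine Submodule.eq_top_of_one_mem_of_mul_mem adjoin_range_ι
    (mem_truncSpan_of_mem_truncO I t z (one_mem _) _) ?_
  rintro u hu _ ⟨y, rfl⟩
  exact mul_ι_mem_of_forall_mul_ι_mem hdec (fun x hx => truncSpan_mul_ι_mem I t z hx hu)
    (hmul_self u hu) y

end TruncSpan

section Coinduced

open UniversalEnvelopingAlgebra

variable {F L : Type*} [Field F] [LieRing L] [LieAlgebra F L]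

attribute [local instance 100] LieRing.ofAssociativeRing

variable (I : LieIdeal F L) (t : L) (z : UniversalEnvelopingAlgebra F L)
  {S : Type*} [AddCommGroup S] [Module F S] (ρ : truncO F L I z →ₐ[F] Module.End F S)

theorem coindHom_lie_apply (x : I) (f : coindHom F L I z S ρ)
    (a : UniversalEnvelopingAlgebra F L) :
    (⁅x, f⁆ : coindHom F L I z S ρ).1 a = f.1 (a * ι F (x : L)) :=
  rfl

theorem coindHom_apply_ι_mul (f : coindHom F L I z S ρ) {y : L} (hy : y ∈ I)
    (a : UniversalEnvelopingAlgebra F L) :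
    f.1 (ι F y * a) = ρ ⟨ι F y, ι_mem_truncO I z hy⟩ (f.1 a) :=
  f.2 ⟨ι F y, _⟩ a

variable {I t z ρ} in
theorem coindHom_apply_pow_mul_ι {f : coindHom F L I z S ρ} {k : ℕ}
    (hf : ∀ j < k, f.1 (ι F t ^ j) = 0) {x : L} (hx : x ∈ I) :
    f.1 (ι F t ^ k * ι F x) = ρ ⟨ι F x, ι_mem_truncO I z hx⟩ (f.1 (ι F t ^ k)) := by
  have hlow : lowerTerms I t k ≤ LinearMap.ker f.1 := by
    rw [lowerTerms, Submodule.span_le]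
    rintro _ ⟨y, hy, j, hj, rfl⟩
    rw [SetLike.mem_coe, LinearMap.mem_ker, coindHom_apply_ι_mul I z ρ f hy, hf j hj, map_zero]
  rw [← sub_add_cancel (ι F t ^ k * ι F x) (ι F x * ι F t ^ k), map_add,
    hlow (pow_mul_ι_sub_mem_lowerTerms I t k hx), coindHom_apply_ι_mul I z ρ f hx, zero_add]

def coindFilt (k : ℕ) : LieSubmodule F I (coindHom F L I z S ρ) where
  carrier := {f | ∀ j < k, f.1 (ι F t ^ j) = 0}
  add_mem' hf hg j hj := by
    rw [Submodule.coe_add, LinearMap.add_apply, hf j hj, hg j hj, add_zero]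
  zero_mem' _ _ := rfl
  smul_mem' c f hf j hj := by
    rw [Submodule.coe_smul, LinearMap.smul_apply, hf j hj, smul_zero]
  lie_mem {x f} hf j hj := by
    rw [coindHom_lie_apply, coindHom_apply_pow_mul_ι (fun i hi => hf i (hi.trans hj)) x.2,
      hf j hj, map_zero]

theorem coindFilt_zero : coindFilt I t z ρ 0 = ⊤ :=
  eq_top_iff.mpr fun _ _ _ hj => absurd hj (Nat.not_lt_zero _)

theorem coindFilt_succ_eq_bot {k : ℕ} (h : truncSpan I t z k = ⊤) :
    coindFilt I t z ρ (k + 1) = ⊥ := by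
  refine eq_bot_iff.mpr fun f hf => (LieSubmodule.mem_bot f).mpr (Subtype.ext ?_)
  suffices truncSpan I t z k ≤ LinearMap.ker f.1 by
    ext a
    exact this (h ▸ trivial)
  rw [truncSpan, Submodule.span_le]
  rintro _ ⟨o, ho, i, hi, rfl⟩
  rw [SetLike.mem_coe, LinearMap.mem_ker, f.2 ⟨o, ho⟩, hf i (by omega), map_zero]

variable [LieRingModule I S]
  (hρ : ∀ (x : L) (hx : x ∈ I) (s : S), ρ ⟨ι F x, ι_mem_truncO I z hx⟩ s = ⁅(⟨x, hx⟩ : I), s⁆)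

variable {I z ρ} in
def coindEval (k : ℕ) : coindFilt I t z ρ k →ₗ⁅F,I⁆ S where
  toFun f := f.1.1 (ι F t ^ k)
  map_add' _ _ := rfl
  map_smul' _ _ := rfl
  map_lie' {x f} := by
    rw [← hρ]
    exact coindHom_apply_pow_mul_ι f.2 x.2

theorem mem_coindFilt_succ_of_coindEval_eq_zero {k : ℕ} {f : coindFilt I t z ρ k}
    (hf : coindEval t hρ k f = 0) : (f : coindHom F L I z S ρ) ∈ coindFilt I t z ρ (k + 1) := by
  intro j hj
  rcases Nat.lt_succ_iff_lt_or_eq.mp hj with hj | rfl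
  · exact f.2 j hj
  · exact hf

end Coinduced

theorem composition_factors_of_truncated_coinduced_general
    (F : Type*) (L : Type*) [Field F] [LieRing L] [LieAlgebra F L]
    (p : ℕ) [Fact p.Prime]
    (I : LieIdeal F L) (t : L) (ht : t ∉ I)
    (hcodim : Module.finrank F (L ⧸ I) = 1)
    (S : Type*) [AddCommGroup S] [Module F S] [LieRingModule ↥I S]
    (hS : LieModule.IsIrreducible F ↥I S)
    (m : ℕ) (v : UniversalEnvelopingAlgebra F L)
    (hv : v ∈ ueaFiltration F L (p ^ m - 1))
    (z : UniversalEnvelopingAlgebra F L)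
    (hz : z = (UniversalEnvelopingAlgebra.ι F t) ^ (p ^ m) + v)
    (ρ : ↥(truncO F L I z) →ₐ[F] Module.End F S)
    (hρ : ∀ (x : L) (hx : x ∈ I) (s : S),
      ρ ⟨UniversalEnvelopingAlgebra.ι F x,
        Algebra.subset_adjoin (Set.mem_union_left _ (Set.mem_image_of_mem _ hx))⟩ s =
        ⁅(⟨x, hx⟩ : ↥I), s⁆) :
    ∀ (P Q : LieSubmodule F ↥I ↥(coindHom F L I z S ρ)), P ≤ Q →
      LieModule.IsIrreducible F ↥I
        ↥(LieSubmodule.map (LieSubmodule.Quotient.mk' P) Q) →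
      Nonempty (↥(LieSubmodule.map (LieSubmodule.Quotient.mk' P) Q) ≃ₗ⁅F,↥I⁆ S) := by
  intro P Q _ hirr
  have hdec : ∀ y : L, ∃ c : F, y - c • t ∈ I :=
    Submodule.exists_sub_smul_mem_of_finrank_quotient_eq_one hcodim ht
  have htop : truncSpan I t z (p ^ m - 1) = ⊤ :=
    truncSpan_eq_top I t z hdec (pow_pos (Fact.out : p.Prime).pos m) hz hv
  exact LieSubmodule.nonempty_map_mk'_equiv_of_filtration (coindFilt I t z ρ)
    (coindFilt_zero I t z ρ) (coindFilt_succ_eq_bot I t z ρ htop) (coindEval t hρ)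
    (fun _ _ => mem_coindFilt_succ_of_coindEval_eq_zero I t z ρ hρ) P Q

/-- Proposition `clifford`: let `L` be a finite-dimensional Lie algebra
over a field of prime characteristic `p`, `I` an ideal of codimension one (with
complement spanned by `t ∉ I`), and `S` a finite-dimensional irreducible `I`-module.
Let `z = (ι t)^(pᵐ) + v` be a central element of `U(L)` with `v` of filtration degree
`< pᵐ`, let `O(L,I)` be the subalgebra of `U(L)` generated by `I` and `z`, and let `S`
be an `O(L,I)`-module (via `ρ`) extending its `I`-module structure.  Then every
composition factor of the restriction to `I` of the truncated coinduced module
`Hom_{O(L,I)}(U(L), S)` is isomorphic to `S`. -/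
theorem composition_factors_of_truncated_coinduced
    (F : Type*) (L : Type*) [Field F] [LieRing L] [LieAlgebra F L]
    [FiniteDimensional F L]
    (p : ℕ) [Fact p.Prime] [CharP F p]
    (I : LieIdeal F L) (t : L) (ht : t ∉ I)
    (hcodim : Module.finrank F (L ⧸ I) = 1)
    (S : Type*) [AddCommGroup S] [Module F S] [LieRingModule ↥I S] [LieModule F ↥I S]
    [FiniteDimensional F S]
    (hS : LieModule.IsIrreducible F ↥I S)
    (m : ℕ) (v : UniversalEnvelopingAlgebra F L)
    (hv : v ∈ ueaFiltration F L (p ^ m - 1))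
    (z : UniversalEnvelopingAlgebra F L)
    (hz : z = (UniversalEnvelopingAlgebra.ι F t) ^ (p ^ m) + v)
    (hcentral : z ∈ Subalgebra.center F (UniversalEnvelopingAlgebra F L))
    (ρ : ↥(truncO F L I z) →ₐ[F] Module.End F S)
    (hρ : ∀ (x : L) (hx : x ∈ I) (s : S),
      ρ ⟨UniversalEnvelopingAlgebra.ι F x,
        Algebra.subset_adjoin (Set.mem_union_left _ (Set.mem_image_of_mem _ hx))⟩ s =
        ⁅(⟨x, hx⟩ : ↥I), s⁆) :
    ∀ (P Q : LieSubmodule F ↥I ↥(coindHom F L I z S ρ)), P ≤ Q →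
      LieModule.IsIrreducible F ↥I
        ↥(LieSubmodule.map (LieSubmodule.Quotient.mk' P) Q) →
      Nonempty (↥(LieSubmodule.map (LieSubmodule.Quotient.mk' P) Q) ≃ₗ⁅F,↥I⁆ S) :=
  composition_factors_of_truncated_coinduced_general F L p I t ht hcodim S hS m v hv z hz ρ hρ
end
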